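/- arXiv:2604.06016 — 4 statements merged into one kernel-verified Lean document; each statement's English description precedes it below -/
import Mathlib

section
/- Let H be a 3-uniform hypergraph that is connected, not complete, and has at least 4 vertices. Then H contains an induced subgraph isomorphic to G_1 (edges {123,234} on 4 vertices), G_2 (edges {123,234,124} on 4 vertices), or G_3 (edges {123,345} on 5 vertices). -/
/-- The 2-shadow graph of a 3-uniform hypergraph: `x ~ y` iff `x ≠ y` and some
hyperedge contains both. -/
def shadow {n : ℕ} (E : Finset (Finset (Fin n))) : SimpleGraph (Fin n) where
  Adj x y := x ≠ y ∧ ∃ e ∈ E, x ∈ e ∧ y ∈ e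
  symm := by
    constructor
    intro x y ⟨hxy, e, he, hx, hy⟩
    exact ⟨hxy.symm, e, he, hy, hx⟩
  loopless := by
    constructor
    intro x ⟨hx, _⟩
    exact hx rfl

/-- Edge set of `G₁` (diamond: edges `{1,2,3},{2,3,4}` on 4 vertices). -/
def G1E : Finset (Finset (Fin 4)) := {{0, 1, 2}, {1, 2, 3}}

/-- Edge set of `G₂` (edges `{1,2,3},{2,3,4},{1,2,4}` on 4 vertices). -/
def G2E : Finset (Finset (Fin 4)) := {{0, 1, 2}, {1, 2, 3}, {0, 1, 3}}

/-- Edge set of `G₃` (loose path: edges `{1,2,3},{3,4,5}` on 5 vertices). -/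
def G3E : Finset (Finset (Fin 5)) := {{0, 1, 2}, {2, 3, 4}}

/-- `H` contains an induced subgraph isomorphic to the pattern hypergraph with
edge set `P`: there is an injection `f` such that, for every 3-set `s` of the
pattern's vertices, `f(s)` is an edge of `H` iff `s` is an edge of the pattern. -/
def HasInducedCopy {n m : ℕ} (E : Finset (Finset (Fin n)))
    (P : Finset (Finset (Fin m))) : Prop :=
  ∃ f : Fin m ↪ Fin n, ∀ s : Finset (Fin m), s.card = 3 →
    (s.map f ∈ E ↔ s ∈ P)

section Helpers
variable {n : ℕ} {E : Finset (Finset (Fin n))}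

private lemma inj4 {a b c d : Fin n} (hab : a≠b) (hac : a≠c) (had : a≠d)
    (hbc : b≠c) (hbd : b≠d) (hcd : c≠d) : Function.Injective ![a,b,c,d] := by
  intro i j hij
  fin_cases i <;> fin_cases j <;> simp_all

private lemma inj5 {a b c d e : Fin n} (hab : a≠b) (hac : a≠c) (had : a≠d) (hae : a≠e)
    (hbc : b≠c) (hbd : b≠d) (hbe : b≠e) (hcd : c≠d) (hce : c≠e) (hde : d≠e) :
    Function.Injective ![a,b,c,d,e] := by
  intro i j hij
  fin_cases i <;> fin_cases j <;> simp_all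

private lemma card3 {a b c : Fin n} (hab : a ≠ b) (hac : a ≠ c) (hbc : b ≠ c) :
    ({a,b,c} : Finset (Fin n)).card = 3 :=
  Finset.card_eq_three.2 ⟨a,b,c,hab,hac,hbc,rfl⟩

private lemma hasG1 {a b c d : Fin n}
    (hab : a≠b) (hac : a≠c) (had : a≠d) (hbc : b≠c) (hbd : b≠d) (hcd : c≠d)
    (h1 : ({a,b,c} : Finset (Fin n)) ∈ E) (h2 : ({b,c,d} : Finset (Fin n)) ∈ E)
    (h3 : ({a,b,d} : Finset (Fin n)) ∉ E) (h4 : ({a,c,d} : Finset (Fin n)) ∉ E) :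
    HasInducedCopy E G1E := by
  refine ⟨⟨![a,b,c,d], inj4 hab hac had hbc hbd hcd⟩, ?_⟩
  intro s hs
  have h4s : s = {0,1,2} ∨ s = {0,1,3} ∨ s = {0,2,3} ∨ s = {1,2,3} := by
    revert hs; revert s; decide
  rcases h4s with rfl|rfl|rfl|rfl <;>
    simp only [Finset.map_insert, Finset.map_singleton, Function.Embedding.coeFn_mk,
      Matrix.cons_val_zero, Matrix.cons_val_one, Matrix.head_cons, Matrix.cons_val_two,
      Matrix.tail_cons, Matrix.cons_val_three, Matrix.head_fin_const]
  · exact iff_of_true h1 (by decide)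
  · exact iff_of_false h3 (by decide)
  · exact iff_of_false h4 (by decide)
  · exact iff_of_true h2 (by decide)

private lemma hasG2 {a b c d : Fin n}
    (hab : a≠b) (hac : a≠c) (had : a≠d) (hbc : b≠c) (hbd : b≠d) (hcd : c≠d)
    (h1 : ({a,b,c} : Finset (Fin n)) ∈ E) (h2 : ({b,c,d} : Finset (Fin n)) ∈ E)
    (h3 : ({a,b,d} : Finset (Fin n)) ∈ E) (h4 : ({a,c,d} : Finset (Fin n)) ∉ E) :
    HasInducedCopy E G2E := by
  refine ⟨⟨![a,b,c,d], inj4 hab hac had hbc hbd hcd⟩, ?_⟩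
  intro s hs
  have h4s : s = {0,1,2} ∨ s = {0,1,3} ∨ s = {0,2,3} ∨ s = {1,2,3} := by
    revert hs; revert s; decide
  rcases h4s with rfl|rfl|rfl|rfl <;>
    simp only [Finset.map_insert, Finset.map_singleton, Function.Embedding.coeFn_mk,
      Matrix.cons_val_zero, Matrix.cons_val_one, Matrix.head_cons, Matrix.cons_val_two,
      Matrix.tail_cons, Matrix.cons_val_three, Matrix.head_fin_const]
  · exact iff_of_true h1 (by decide)
  · exact iff_of_true h3 (by decide)
  · exact iff_of_false h4 (by decide)
  · exact iff_of_true h2 (by decide)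

private lemma hasG3 {a b c d e : Fin n}
    (hab : a≠b) (hac : a≠c) (had : a≠d) (hae : a≠e) (hbc : b≠c) (hbd : b≠d)
    (hbe : b≠e) (hcd : c≠d) (hce : c≠e) (hde : d≠e)
    (h1 : ({a,b,c} : Finset (Fin n)) ∈ E) (h2 : ({c,d,e} : Finset (Fin n)) ∈ E)
    (n1 : ({a,b,d} : Finset (Fin n)) ∉ E) (n2 : ({a,b,e} : Finset (Fin n)) ∉ E)
    (n3 : ({a,c,d} : Finset (Fin n)) ∉ E) (n4 : ({a,c,e} : Finset (Fin n)) ∉ E)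
    (n5 : ({a,d,e} : Finset (Fin n)) ∉ E) (n6 : ({b,c,d} : Finset (Fin n)) ∉ E)
    (n7 : ({b,c,e} : Finset (Fin n)) ∉ E) (n8 : ({b,d,e} : Finset (Fin n)) ∉ E) :
    HasInducedCopy E G3E := by
  refine ⟨⟨![a,b,c,d,e], inj5 hab hac had hae hbc hbd hbe hcd hce hde⟩, ?_⟩
  intro s hs
  have h10 : s = {0,1,2} ∨ s = {0,1,3} ∨ s = {0,1,4} ∨ s = {0,2,3} ∨ s = {0,2,4} ∨
      s = {0,3,4} ∨ s = {1,2,3} ∨ s = {1,2,4} ∨ s = {1,3,4} ∨ s = {2,3,4} := by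
    revert hs; revert s; decide
  rcases h10 with rfl|rfl|rfl|rfl|rfl|rfl|rfl|rfl|rfl|rfl <;>
    simp only [Finset.map_insert, Finset.map_singleton, Function.Embedding.coeFn_mk,
      Matrix.cons_val_zero, Matrix.cons_val_one, Matrix.head_cons, Matrix.cons_val_two,
      Matrix.tail_cons, Matrix.cons_val_three, Matrix.cons_val_four, Matrix.head_fin_const]
  · exact iff_of_true h1 (by decide)
  · exact iff_of_false n1 (by decide)
  · exact iff_of_false n2 (by decide)
  · exact iff_of_false n3 (by decide)
  · exact iff_of_false n4 (by decide)
  · exact iff_of_false n5 (by decide)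
  · exact iff_of_false n6 (by decide)
  · exact iff_of_false n7 (by decide)
  · exact iff_of_false n8 (by decide)
  · exact iff_of_true h2 (by decide)

/-- Two edges of a 4-set sharing two vertices force a third, unless a copy of G1/G2 exists. -/
private lemma L1a (hG1 : ¬ HasInducedCopy E G1E) (hG2 : ¬ HasInducedCopy E G2E)
    {a b c d : Fin n}
    (hab : a≠b) (hac : a≠c) (had : a≠d) (hbc : b≠c) (hbd : b≠d) (hcd : c≠d)
    (h1 : ({a,b,c} : Finset (Fin n)) ∈ E) (h2 : ({b,c,d} : Finset (Fin n)) ∈ E) :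
    ({a,b,d} : Finset (Fin n)) ∈ E := by
  by_contra h3
  by_cases h4 : ({a,c,d} : Finset (Fin n)) ∈ E
  · refine hG2 (hasG2 hac hab had (Ne.symm hbc) hcd hbd ?_ ?_ h4 h3)
    · rwa [show ({a,c,b} : Finset (Fin n)) = {a,b,c} from by ext u; simp; tauto]
    · rwa [show ({c,b,d} : Finset (Fin n)) = {b,c,d} from by ext u; simp; tauto]
  · exact hG1 (hasG1 hab hac had hbc hbd hcd h1 h2 h3 h4)

end Helpers

set_option maxHeartbeats 3200000 in
/-- A connected, non-complete 3-uniform hypergraph on at least 4 vertices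
contains an induced copy of `G₁`, `G₂`, or `G₃`. -/
theorem induced_copy_of_connected_not_complete {n : ℕ} (hn : 4 ≤ n)
    (E : Finset (Finset (Fin n))) (hE : ∀ e ∈ E, e.card = 3)
    (hconn : (shadow E).Connected)
    (hnotcomplete : ∃ s : Finset (Fin n), s.card = 3 ∧ s ∉ E) :
    HasInducedCopy E G1E ∨ HasInducedCopy E G2E ∨ HasInducedCopy E G3E := by
  by_contra hcon
  push_neg at hcon
  obtain ⟨hG1, hG2, hG3⟩ := hcon
  obtain ⟨s0, hs0card, hs0⟩ := hnotcomplete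
  -- E is nonempty
  obtain ⟨e0, he0E⟩ : ∃ e, e ∈ E := by
    have h01 : (⟨0, by omega⟩ : Fin n) ≠ ⟨1, by omega⟩ := by simp [Fin.ext_iff]
    obtain ⟨w⟩ := hconn.preconnected ⟨0, by omega⟩ ⟨1, by omega⟩
    cases w with
    | cons h p => obtain ⟨-, e, he, -⟩ := h; exact ⟨e, he⟩
  have he0card : e0.card = 3 := hE e0 he0E
  -- maximal clique K containing e0
  set fam : Finset (Finset (Fin n)) :=
    Finset.univ.powerset.filter (fun K => e0 ⊆ K ∧ ∀ t ∈ K.powersetCard 3, t ∈ E)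
    with hfam
  have he0fam : e0 ∈ fam := by
    simp only [hfam, Finset.mem_filter, Finset.mem_powerset]
    refine ⟨Finset.subset_univ _, subset_rfl, ?_⟩
    intro t ht
    rw [Finset.mem_powersetCard] at ht
    have : t = e0 := Finset.eq_of_subset_of_card_le ht.1 (by omega)
    exact this ▸ he0E
  obtain ⟨K, hKfam, hKmax⟩ := Finset.exists_max_image fam Finset.card ⟨e0, he0fam⟩
  simp only [hfam, Finset.mem_filter, Finset.mem_powerset] at hKfam
  obtain ⟨-, he0K, hKtri'⟩ := hKfam
  have hKtri : ∀ p q r : Fin n, p ∈ K → q ∈ K → r ∈ K → p ≠ q → p ≠ r → q ≠ r →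
      ({p, q, r} : Finset (Fin n)) ∈ E := by
    intro p q r hp hq hr hpq hpr hqr
    refine hKtri' _ (Finset.mem_powersetCard.2 ⟨?_, card3 hpq hpr hqr⟩)
    intro u hu
    simp only [Finset.mem_insert, Finset.mem_singleton] at hu
    rcases hu with rfl|rfl|rfl <;> assumption
  have hK3 : 3 ≤ K.card := he0card ▸ Finset.card_le_card he0K
  -- C1: no edge has exactly two vertices in K
  have C1 : ∀ v ∉ K, ∀ x ∈ K, ∀ y ∈ K, x ≠ y → ({x, y, v} : Finset (Fin n)) ∉ E := by
    intro v hv x hx y hy hxy hEv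
    have L2 : ∀ r ∈ K, ∀ s ∈ K, r ≠ s → ({r, s, v} : Finset (Fin n)) ∈ E →
        ∀ z ∈ K, z ≠ r → z ≠ s →
        ({r, z, v} : Finset (Fin n)) ∈ E ∧ ({s, z, v} : Finset (Fin n)) ∈ E := by
      intro r hr s hs hrs hrsv z hz hzr hzs
      have hzv : z ≠ v := fun h => hv (h ▸ hz)
      have hrv : r ≠ v := fun h => hv (h ▸ hr)
      have hsv : s ≠ v := fun h => hv (h ▸ hs)
      have hzrs : ({z, r, s} : Finset (Fin n)) ∈ E := hKtri z r s hz hr hs hzr hzs hrs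
      have h1 : ({z, r, v} : Finset (Fin n)) ∈ E :=
        L1a hG1 hG2 hzr hzs hzv hrs hrv hsv hzrs hrsv
      have hzsr : ({z, s, r} : Finset (Fin n)) ∈ E := by
        rwa [show ({z, s, r} : Finset (Fin n)) = {z, r, s} from by ext u; simp; tauto]
      have hsrv : ({s, r, v} : Finset (Fin n)) ∈ E := by
        rwa [show ({s, r, v} : Finset (Fin n)) = {r, s, v} from by ext u; simp; tauto]
      have h2 : ({z, s, v} : Finset (Fin n)) ∈ E :=
        L1a hG1 hG2 hzs hzr hzv (Ne.symm hrs) hsv hrv hzsr hsrv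
      constructor
      · rwa [show ({r, z, v} : Finset (Fin n)) = {z, r, v} from by ext u; simp; tauto]
      · rwa [show ({s, z, v} : Finset (Fin n)) = {z, s, v} from by ext u; simp; tauto]
    have prop : ∀ p ∈ K, ∀ q ∈ K, p ≠ q → ({p, q, v} : Finset (Fin n)) ∈ E := by
      intro p hp q hq hpq
      by_cases hpx : p = x
      · subst hpx
        by_cases hqy : q = y
        · subst hqy; exact hEv
        · exact (L2 p hp y hy hxy hEv q hq (Ne.symm hpq) hqy).1
      · by_cases hpy : p = y
        · subst hpy
          by_cases hqx : q = x
          · subst hqx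
            rwa [show ({p, q, v} : Finset (Fin n)) = {q, p, v} from by ext u; simp; tauto]
          · exact (L2 x hx p hp hxy hEv q hq hqx (Ne.symm hpq)).2
        · have hxp : ({x, p, v} : Finset (Fin n)) ∈ E :=
            (L2 x hx y hy hxy hEv p hp hpx hpy).1
          by_cases hqx : q = x
          · subst hqx
            rwa [show ({p, q, v} : Finset (Fin n)) = {q, p, v} from by ext u; simp; tauto]
          · by_cases hqy : q = y
            · have h' := (L2 x hx y hy hxy hEv p hp hpx hpy).2
              rw [show ({p, q, v} : Finset (Fin n)) = {y, p, v} from by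
                subst hqy; ext u; simp; tauto]
              exact h'
            · exact (L2 x hx p hp (Ne.symm hpx) hxp q hq hqx (Ne.symm hpq)).2
    have hins : insert v K ∈ fam := by
      simp only [hfam, Finset.mem_filter, Finset.mem_powerset]
      refine ⟨Finset.subset_univ _, he0K.trans (Finset.subset_insert _ _), ?_⟩
      intro t ht
      rw [Finset.mem_powersetCard] at ht
      obtain ⟨htsub, htcard⟩ := ht
      by_cases hvt : v ∈ t
      · have h2 : (t.erase v).card = 2 := by
          rw [Finset.card_erase_of_mem hvt, htcard]
        obtain ⟨p, q, hpq, hpqe⟩ := Finset.card_eq_two.1 h2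
        have hpK : p ∈ K := by
          have hp : p ∈ t.erase v := hpqe ▸ Finset.mem_insert_self p {q}
          have := Finset.mem_erase.1 hp
          rcases Finset.mem_insert.1 (htsub this.2) with h | h
          · exact absurd h this.1
          · exact h
        have hqK : q ∈ K := by
          have hq : q ∈ t.erase v := hpqe ▸ Finset.mem_insert_of_mem (Finset.mem_singleton_self q)
          have := Finset.mem_erase.1 hq
          rcases Finset.mem_insert.1 (htsub this.2) with h | h
          · exact absurd h this.1
          · exact h
        have ht' : t = {p, q, v} := by
          have hie := Finset.insert_erase hvt
          rw [hpqe] at hie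
          rw [← hie]; ext u; simp; tauto
        rw [ht']
        exact prop p hpK q hqK hpq
      · refine hKtri' t (Finset.mem_powersetCard.2 ⟨?_, htcard⟩)
        intro u hu
        rcases Finset.mem_insert.1 (htsub hu) with h | h
        · exact absurd (h ▸ hu) hvt
        · exact h
    have hle : (insert v K).card ≤ K.card := hKmax _ hins
    rw [Finset.card_insert_of_notMem hv] at hle
    omega
  -- K is not everything
  obtain ⟨v0, hv0⟩ : ∃ v, v ∉ K := by
    by_contra h
    push_neg at h
    exact hs0 (hKtri' s0 (Finset.mem_powersetCard.2 ⟨fun u _ => h u, hs0card⟩))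
  obtain ⟨u0, hu0e⟩ := Finset.card_pos.1 (show 0 < e0.card by omega)
  have hu0 : u0 ∈ K := he0K hu0e
  -- crossing edge
  obtain ⟨w⟩ := hconn.preconnected u0 v0
  obtain ⟨d, -, hd1, hd2⟩ := w.exists_boundary_dart (↑K : Set (Fin n))
    (Finset.mem_coe.2 hu0) (fun h => hv0 (Finset.mem_coe.1 h))
  obtain ⟨hxy, f, hfE, hxf, hyf⟩ := d.adj
  set x := d.toProd.1 with hxdef
  set y := d.toProd.2 with hydef
  have hxK : x ∈ K := Finset.mem_coe.1 hd1
  have hyK : y ∉ K := fun h => hd2 (Finset.mem_coe.2 h)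
  -- third vertex of f
  have hsub : ({x, y} : Finset (Fin n)) ⊆ f := by
    intro u hu
    rcases Finset.mem_insert.1 hu with rfl | hu
    · exact hxf
    · exact (Finset.mem_singleton.1 hu) ▸ hyf
  have hcard1 : (f \ {x, y}).card = 1 := by
    rw [Finset.card_sdiff_of_subset hsub, hE f hfE, Finset.card_pair hxy]
  obtain ⟨z, hz⟩ := Finset.card_eq_one.1 hcard1
  have hzf : z ∈ f \ ({x, y} : Finset (Fin n)) := hz ▸ Finset.mem_singleton_self z
  have hzxy := Finset.mem_sdiff.1 hzf
  have hzx : z ≠ x := fun h => hzxy.2 (by simp [h])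
  have hzy : z ≠ y := fun h => hzxy.2 (by simp [h])
  have hf_eq : f = {x, y, z} := by
    have hu := Finset.sdiff_union_of_subset hsub
    rw [hz] at hu
    rw [← hu]; ext u; simp; tauto
  have hfmem : ({x, y, z} : Finset (Fin n)) ∈ E := hf_eq ▸ hfE
  by_cases hzK : z ∈ K
  · -- edge with two vertices in K: contradiction with C1
    refine C1 y hyK x hxK z hzK (Ne.symm hzx) ?_
    rwa [show ({x, z, y} : Finset (Fin n)) = {x, y, z} from by ext u; simp; tauto]
  · -- G3 configuration
    have h2 : 1 < (K.erase x).card := by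
      rw [Finset.card_erase_of_mem hxK]; omega
    obtain ⟨p, hp, q, hq, hpq⟩ := Finset.one_lt_card.1 h2
    obtain ⟨hpx, hpK⟩ := Finset.mem_erase.1 hp
    obtain ⟨hqx, hqK⟩ := Finset.mem_erase.1 hq
    have hpy : p ≠ y := fun h => hyK (h ▸ hpK)
    have hqy : q ≠ y := fun h => hyK (h ▸ hqK)
    have hpz : p ≠ z := fun h => hzK (h ▸ hpK)
    have hqz : q ≠ z := fun h => hzK (h ▸ hqK)
    have hxy' : x ≠ y := hxy
    have hxz : x ≠ z := Ne.symm hzx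
    have hyz : y ≠ z := Ne.symm hzy
    have e1 : ({p, q, x} : Finset (Fin n)) ∈ E := hKtri p q x hpK hqK hxK hpq hpx hqx
    have n1 : ({p, q, y} : Finset (Fin n)) ∉ E := C1 y hyK p hpK q hqK hpq
    have n2 : ({p, q, z} : Finset (Fin n)) ∉ E := C1 z hzK p hpK q hqK hpq
    have n3 : ({p, x, y} : Finset (Fin n)) ∉ E := C1 y hyK p hpK x hxK hpx
    have n4 : ({p, x, z} : Finset (Fin n)) ∉ E := C1 z hzK p hpK x hxK hpx
    have n6 : ({q, x, y} : Finset (Fin n)) ∉ E := C1 y hyK q hqK x hxK hqx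
    have n7 : ({q, x, z} : Finset (Fin n)) ∉ E := C1 z hzK q hqK x hxK hqx
    have hyzx : ({y, z, x} : Finset (Fin n)) ∈ E := by
      rwa [show ({y, z, x} : Finset (Fin n)) = {x, y, z} from by ext u; simp; tauto]
    have n5 : ({p, y, z} : Finset (Fin n)) ∉ E := by
      intro hpyz
      have := L1a hG1 hG2 hpy hpz hpx hyz (Ne.symm hxy') hzx hpyz hyzx
      exact n3 (by rwa [show ({p, x, y} : Finset (Fin n)) = {p, y, x} from by ext u; simp; tauto])
    have n8 : ({q, y, z} : Finset (Fin n)) ∉ E := by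
      intro hqyz
      have := L1a hG1 hG2 hqy hqz hqx hyz (Ne.symm hxy') hzx hqyz hyzx
      exact n6 (by rwa [show ({q, x, y} : Finset (Fin n)) = {q, y, x} from by ext u; simp; tauto])
    exact hG3 (hasG3 hpq hpx hpy hpz hqx hqy hqz hxy' hxz hyz
      e1 hfmem n1 n2 n3 n4 n5 n6 n7 n8)
end

section
/- Let G be the complete 3-uniform hypergraph on n ≥ 3 vertices (every 3-subset is an edge). If x ∈ ℂⁿ satisfies A_G x = 0 and xᵀx = 0, then x = 0. In particular, G is regular. -/
/-- `(A x)_i` for the complete 3-uniform hypergraph on `[n]`: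
`(A x)_i = Σ_{j,k} a_{ijk} x_j x_k` where `a_{ijk} = 1` iff `i,j,k` are pairwise
distinct. -/
noncomputable def completeAdjMulVec {n : ℕ} (x : Fin n → ℂ) (i : Fin n) : ℂ :=
  ∑ j : Fin n, ∑ k : Fin n,
    (if i ≠ j ∧ i ≠ k ∧ j ≠ k then (1 : ℂ) else 0) * x j * x k

lemma completeAdjMulVec_eq {n : ℕ} (x : Fin n → ℂ) (i : Fin n) :
    completeAdjMulVec x i =
      (∑ j, x j - x i) ^ 2 - ((∑ j, x j ^ 2) - x i ^ 2) := by
  have step : ∀ j k : Fin n,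
      (if i ≠ j ∧ i ≠ k ∧ j ≠ k then (1 : ℂ) else 0) * x j * x k =
        (if i ≠ j then x j else 0) * (if i ≠ k then x k else 0) -
          (if i ≠ j ∧ j = k then x j * x k else 0) := by
    intro j k
    by_cases h1 : i = j <;> by_cases h2 : i = k <;> by_cases h3 : j = k <;>
      simp [h1, h2, h3]
  have hS : ∑ j, (if i ≠ j then x j else 0) = (∑ j, x j) - x i := by
    have : ∀ j : Fin n, (if i ≠ j then x j else 0) =
        x j - (if i = j then x j else 0) := by
      intro j; by_cases h : i = j <;> simp [h]
    simp [this, Finset.sum_sub_distrib]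
  unfold completeAdjMulVec
  simp only [step, Finset.sum_sub_distrib, ← Finset.sum_mul, ← Finset.mul_sum, hS]
  have hinner : ∀ j : Fin n,
      ∑ k, (if i ≠ j ∧ j = k then x j * x k else 0) =
        (if i ≠ j then x j ^ 2 else 0) := by
    intro j
    by_cases h : i = j <;> simp [h, sq, Finset.sum_ite_eq]
  rw [Finset.sum_congr rfl fun j _ => hinner j]
  have hQ : ∑ j, (if i ≠ j then x j ^ 2 else 0) = (∑ j, x j ^ 2) - x i ^ 2 := by
    have : ∀ j : Fin n, (if i ≠ j then x j ^ 2 else 0) =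
        x j ^ 2 - (if i = j then x j ^ 2 else 0) := by
      intro j; by_cases h : i = j <;> simp [h]
    simp [this, Finset.sum_sub_distrib]
  rw [hQ]; ring

/-- For the complete 3-uniform hypergraph `G` on `n ≥ 3` vertices:
if `A_G x = 0` and `xᵀx = 0` then `x = 0`; in particular `G` is regular. -/
theorem complete_regular {n : ℕ} (hn : 3 ≤ n) (x : Fin n → ℂ)
    (h1 : ∀ i, completeAdjMulVec x i = 0) (h2 : ∑ i, x i ^ 2 = 0) :
    x = 0 := by
  set S : ℂ := ∑ j, x j with hSdef
  have key : ∀ i, 2 * x i ^ 2 - 2 * S * x i + S ^ 2 = 0 := by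
    intro i
    have h := h1 i
    rw [completeAdjMulVec_eq, h2] at h
    have : (S - x i) ^ 2 - (0 - x i ^ 2) = 0 := h
    linear_combination this
  -- sum the relation over i
  have hsum : ∑ i, (2 * x i ^ 2 - 2 * S * x i + S ^ 2) = 0 := by
    simp [key]
  have hexp : ∑ i, (2 * x i ^ 2 - 2 * S * x i + S ^ 2) =
      2 * (∑ i, x i ^ 2) - 2 * S * S + (n : ℂ) * S ^ 2 := by
    simp [Finset.sum_add_distrib, Finset.sum_sub_distrib, ← Finset.mul_sum,
      Finset.card_univ]
    exact Or.inl hSdef.symm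
  rw [hexp, h2] at hsum
  have hn2 : ((n : ℂ) - 2) ≠ 0 := by
    intro h
    have : (n : ℂ) = 2 := by linear_combination h
    have : (n : ℕ) = 2 := by exact_mod_cast this
    omega
  have hS0 : S = 0 := by
    have : ((n : ℂ) - 2) * S ^ 2 = 0 := by linear_combination hsum
    rcases mul_eq_zero.mp this with h | h
    · exact absurd h hn2
    · exact pow_eq_zero_iff (by norm_num) |>.mp h
  funext i
  have := key i
  rw [hS0] at this
  have : x i ^ 2 = 0 := by linear_combination this / 2
  simpa using pow_eq_zero_iff (n := 2) (by norm_num) |>.mp this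
end

section
/- A graph G (2-uniform hypergraph) with real symmetric adjacency matrix A is regular (in the sense that no nonzero complex vector x satisfies A x = 0 and xᵀx = 0) if and only if the nullity of A is at most 1. -/
/-!
Real and imaginary parts of a complex kernel vector lie in the real kernel. If that kernel is
spanned by a single real vector `w`, every complex kernel vector is `c • w` and
`∑ (c wᵢ)² = c² ‖w‖²` vanishes only when the vector does. If the kernel contains independent
`u, v`, the binary quadratic form `(a, b) ↦ ∑ (a uᵢ + b vᵢ)²` has a nontrivial zero over the
algebraically closed field `ℂ`, and `a u + b v` is a nonzero isotropic kernel vector.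
-/

open Matrix Polynomial Module

theorem IsAlgClosed.exists_quadratic_form_eq_zero {k : Type*} [Field k] [IsAlgClosed k]
    (α β γ : k) : ∃ a b : k, (a, b) ≠ 0 ∧ α * a ^ 2 + β * (a * b) + γ * b ^ 2 = 0 := by
  by_cases hα : α = 0
  · exact ⟨1, 0, by simp, by simp [hα]⟩
  · obtain ⟨a, ha⟩ := exists_root (C α * X ^ 2 + C β * X + C γ) (by simp [degree_quadratic hα])
    exact ⟨a, 1, by simp, by simpa using ha⟩

theorem Submodule.exists_linearIndependent_pair_of_one_lt_finrank {K V : Type*} [DivisionRing K]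
    [AddCommGroup V] [Module K V] {S : Submodule K V} (hS : 1 < finrank K S) :
    ∃ u ∈ S, ∃ v ∈ S, LinearIndependent K ![u, v] := by
  obtain ⟨f, hf⟩ := exists_linearIndependent_of_le_finrank (n := 2) hS
  have hf' := hf.map' S.subtype S.ker_subtype
  rw [show S.subtype ∘ f = ![(f 0 : V), f 1] by ext i : 1; fin_cases i <;> rfl] at hf'
  exact ⟨f 0, (f 0).2, f 1, (f 1).2, hf'⟩

namespace Complex

theorem map_ofReal_mulVec_eq_zero_iff {m ι : Type*} [Fintype ι] (A : Matrix m ι ℝ)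
    (x : ι → ℂ) :
    A.map ((↑) : ℝ → ℂ) *ᵥ x = 0 ↔
      A *ᵥ (fun i ↦ (x i).re) = 0 ∧ A *ᵥ (fun i ↦ (x i).im) = 0 := by
  simp only [funext_iff, Complex.ext_iff, mulVec, dotProduct, map_apply, re_sum, im_sum,
    re_ofReal_mul, im_ofReal_mul, Pi.zero_apply, zero_re, zero_im, forall_and]

theorem linearCombination_ofReal_ne_zero {ι : Type*} {u v : ι → ℝ}
    (huv : LinearIndependent ℝ ![u, v]) {a b : ℂ} (hab : (a, b) ≠ 0) :
    (fun i ↦ a * u i + b * v i) ≠ 0 := by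
  contrapose! hab
  have hre := LinearIndependent.pair_iff.mp huv a.re b.re (by
    ext i; simpa using congrArg re (congrFun hab i))
  have him := LinearIndependent.pair_iff.mp huv a.im b.im (by
    ext i; simpa using congrArg im (congrFun hab i))
  simp [Complex.ext_iff, hre, him]

theorem exists_eq_mul_ofReal_of_finrank_le_one {ι : Type*} [Finite ι]
    {S : Submodule ℝ (ι → ℝ)} (hS : finrank ℝ S ≤ 1) {x : ι → ℂ}
    (hre : (fun i ↦ (x i).re) ∈ S) (him : (fun i ↦ (x i).im) ∈ S) :
    ∃ (c : ℂ) (w : ι → ℝ), ∀ i, x i = c * w i := by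
  obtain ⟨w, hw⟩ := finrank_le_one_iff.mp hS
  obtain ⟨a, ha⟩ := hw ⟨_, hre⟩
  obtain ⟨b, hb⟩ := hw ⟨_, him⟩
  refine ⟨a + b * I, w, fun i ↦ ?_⟩
  have ha_i := congrFun (congrArg Subtype.val ha) i
  have hb_i := congrFun (congrArg Subtype.val hb) i
  simp only [SetLike.val_smul, Pi.smul_apply, smul_eq_mul] at ha_i hb_i
  apply Complex.ext <;> simp [← ha_i, ← hb_i]

variable {ι : Type*} [Fintype ι]

theorem sum_sq_linearCombination (a b : ℂ) (u v : ι → ℝ) :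
    ∑ i, (a * u i + b * v i) ^ 2 =
      ↑(u ⬝ᵥ u) * a ^ 2 + 2 * ↑(u ⬝ᵥ v) * (a * b) + ↑(v ⬝ᵥ v) * b ^ 2 := by
  simp only [dotProduct, ofReal_sum, ofReal_mul, Finset.sum_mul, Finset.mul_sum,
    ← Finset.sum_add_distrib]
  exact Finset.sum_congr rfl fun i _ ↦ by ring

theorem exists_sum_sq_eq_zero_of_linearIndependent {u v : ι → ℝ}
    (huv : LinearIndependent ℝ ![u, v]) :
    ∃ a b : ℂ, (fun i ↦ a * u i + b * v i) ≠ 0 ∧ ∑ i, (a * u i + b * v i) ^ 2 = 0 := by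
  obtain ⟨a, b, hab, hq⟩ := IsAlgClosed.exists_quadratic_form_eq_zero
    (↑(u ⬝ᵥ u) : ℂ) (2 * ↑(u ⬝ᵥ v)) ↑(v ⬝ᵥ v)
  exact ⟨a, b, linearCombination_ofReal_ne_zero huv hab, by rw [sum_sq_linearCombination, hq]⟩

theorem eq_zero_of_sum_sq_eq_zero_of_eq_mul_ofReal {x : ι → ℂ} {c : ℂ} {w : ι → ℝ}
    (hx : ∀ i, x i = c * w i) (hsq : ∑ i, x i ^ 2 = 0) : x = 0 := by
  have hcw : c ^ 2 * ↑(w ⬝ᵥ w) = 0 := by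
    rw [← hsq, dotProduct, ofReal_sum, Finset.mul_sum]
    exact Finset.sum_congr rfl fun i _ ↦ by rw [hx]; push_cast; ring
  ext i
  rcases mul_eq_zero.mp hcw with hc | hw
  · simp [hx, pow_eq_zero_iff two_ne_zero |>.mp hc]
  · simp [hx, dotProduct_self_eq_zero.mp (ofReal_eq_zero.mp hw)]

theorem exists_isotropic_iff_one_lt_finrank (S : Submodule ℝ (ι → ℝ)) :
    (∃ x : ι → ℂ, x ≠ 0 ∧ (fun i ↦ (x i).re) ∈ S ∧ (fun i ↦ (x i).im) ∈ S ∧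
        ∑ i, x i ^ 2 = 0) ↔
      1 < finrank ℝ S := by
  constructor
  · rintro ⟨x, hx0, hre, him, hsq⟩
    by_contra! hS
    obtain ⟨c, w, hx⟩ := exists_eq_mul_ofReal_of_finrank_le_one hS hre him
    exact hx0 (eq_zero_of_sum_sq_eq_zero_of_eq_mul_ofReal hx hsq)
  · intro hS
    obtain ⟨u, hu, v, hv, huv⟩ := S.exists_linearIndependent_pair_of_one_lt_finrank hS
    obtain ⟨a, b, hx0, hsq⟩ := exists_sum_sq_eq_zero_of_linearIndependent huv
    refine ⟨_, hx0, ?_, ?_, hsq⟩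
    · convert S.add_mem (S.smul_mem a.re hu) (S.smul_mem b.re hv) using 1
      ext i; simp
    · convert S.add_mem (S.smul_mem a.im hu) (S.smul_mem b.im hv) using 1
      ext i; simp

end Complex

theorem graph_regular_iff_nullity_le_one_general {n : ℕ}
    (A : Matrix (Fin n) (Fin n) ℝ) :
    (¬ ∃ x : Fin n → ℂ, x ≠ 0 ∧
        (A.map (fun a => (a : ℂ))).mulVec x = 0 ∧ ∑ i, x i ^ 2 = 0) ↔
      Module.finrank ℝ (LinearMap.ker A.mulVecLin) ≤ 1 := by
  rw [← not_lt, ← Complex.exists_isotropic_iff_one_lt_finrank]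
  simp only [Complex.map_ofReal_mulVec_eq_zero_iff, LinearMap.mem_ker, mulVecLin_apply, and_assoc]

/-- A graph with real symmetric adjacency matrix `A` is regular (no nonzero
complex vector `x` satisfies `A x = 0` and `xᵀx = 0`, where `xᵀx = Σᵢ xᵢ²`)
iff the nullity of `A` is at most `1`. -/
theorem graph_regular_iff_nullity_le_one {n : ℕ}
    (A : Matrix (Fin n) (Fin n) ℝ) (hA : A.IsSymm) :
    (¬ ∃ x : Fin n → ℂ, x ≠ 0 ∧
        (A.map (fun a => (a : ℂ))).mulVec x = 0 ∧ ∑ i, x i ^ 2 = 0) ↔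
      Module.finrank ℝ (LinearMap.ker A.mulVecLin) ≤ 1 :=
  graph_regular_iff_nullity_le_one_general A
end

section
/- Let G be a k-uniform hypergraph (k ≥ 2) on vertex set C ⊔ D with |C| = s, let R be an s×s matrix and Q = R ⊕ I_{|D|}. Suppose that for each subset A ⊆ D with |A| ≤ k, the link of A in C (the (k−|A|)-uniform hypergraph on C with edges {f ⊆ C : |f| = k−|A|, f ∪ A ∈ E(G)}) has adjacency tensor L^A satisfying Rᵀ L^A R = M^A where M^A is the adjacency tensor of a (k−|A|)-uniform hypergraph t(L^A) on C, and that every edge of G is of the form f ∪ A for such f ⊆ C and A ⊆ D. Define H on C ⊔ D by E(H) = ⋃_{A ⊆ D} { f ∪ A : f ∈ E(t(L^A)) }. Then Qᵀ A_G Q = A_H. -/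
open scoped Classical

/-- The Shao conjugation `Qᵀ A Q` of an order-`r` tensor `A` on index type `V`:
`(Qᵀ A Q)_{i} = Σ_{j} a_{j} q_{j_1 i_1} ⋯ q_{j_r i_r}`. -/
noncomputable def tconj {V : Type*} [Fintype V] {r : ℕ}
    (Q : Matrix V V ℂ) (A : (Fin r → V) → ℂ) : (Fin r → V) → ℂ :=
  fun i => ∑ j : Fin r → V, A j * ∏ t : Fin r, Q (j t) (i t)

/-- The order-`r` adjacency tensor of a hypergraph with edge set `E`:
entry `1` on tuples of distinct indices forming an edge, `0` elsewhere. -/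
noncomputable def adjTensor {V : Type*} [Fintype V] [DecidableEq V]
    (E : Finset (Finset V)) {r : ℕ} : (Fin r → V) → ℂ :=
  fun j => if Function.Injective j ∧ Finset.image j Finset.univ ∈ E then 1 else 0

/-- The embedding `C = Fin s ↪ Fin s ⊕ Fin d`. -/
def inlEmb (s d : ℕ) : Fin s ↪ Fin s ⊕ Fin d := ⟨Sum.inl, Sum.inl_injective⟩

/-- The embedding `D = Fin d ↪ Fin s ⊕ Fin d`. -/
def inrEmb (s d : ℕ) : Fin d ↪ Fin s ⊕ Fin d := ⟨Sum.inr, Sum.inr_injective⟩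

/-- Edge set of the link of `A ⊆ D` in `C`: the `(k−|A|)`-sets `f ⊆ C` with
`f ∪ A ∈ E(G)`. -/
noncomputable def linkE {s d : ℕ} (E : Finset (Finset (Fin s ⊕ Fin d))) (k : ℕ)
    (A : Finset (Fin d)) : Finset (Finset (Fin s)) :=
  Finset.univ.filter fun f =>
    f.card = k - A.card ∧ f.map (inlEmb s d) ∪ A.map (inrEmb s d) ∈ E

/-! Fix an output tuple `i`. Since `Q = R ⊕ I`, a tuple `j` contributes to `(Qᵀ A_G Q)_i` only
if it agrees with `i` where `i` takes values in `D` and takes values in `C` where `i` does; so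
the sum runs over the ways `g` of refilling the `C`-positions of `i`. If `i` repeats a vertex of `D`,
so does every refilled tuple, and both sides vanish. Otherwise let `A` be the set of `D`-entries
of `i`: a refilled tuple is an edge tuple of `G` exactly when `g` is an edge tuple of the link of
`A`, so the sum is the entry of `Rᵀ L^A R = M^A` at the `C`-part of `i`, which is `(A_H)_i`. -/

open Finset

section FillLeft

variable {α β : Type*} {k : ℕ}

abbrev leftPos (i : Fin k → α ⊕ β) : Type := {t : Fin k // (i t).isLeft}

def leftPart (i : Fin k → α ⊕ β) (t : leftPos i) : α := (i t.1).getLeft t.2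

def fillLeft (i : Fin k → α ⊕ β) (g : leftPos i → α) : Fin k → α ⊕ β :=
  fun t => if h : (i t).isLeft then Sum.inl (g ⟨t, h⟩) else i t

lemma fillLeft_of_isLeft (i : Fin k → α ⊕ β) (g : leftPos i → α) {t : Fin k}
    (ht : (i t).isLeft) : fillLeft i g t = .inl (g ⟨t, ht⟩) :=
  dif_pos ht

lemma fillLeft_of_not_isLeft (i : Fin k → α ⊕ β) (g : leftPos i → α) {t : Fin k}
    (ht : ¬(i t).isLeft) : fillLeft i g t = i t :=
  dif_neg ht

lemma fillLeft_eq_inl_iff (i : Fin k → α ⊕ β) (g : leftPos i → α) (t : Fin k) (a : α) :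
    fillLeft i g t = .inl a ↔ ∃ h : (i t).isLeft, g ⟨t, h⟩ = a := by
  by_cases h : (i t).isLeft
  · simp [fillLeft, h]
  · simp only [fillLeft, h, dite_false, Bool.false_eq_true, IsEmpty.exists_iff, iff_false]
    intro hta
    simp [hta] at h

lemma fillLeft_eq_inr_iff (i : Fin k → α ⊕ β) (g : leftPos i → α) (t : Fin k) (b : β) :
    fillLeft i g t = .inr b ↔ i t = .inr b := by
  rcases ht : i t with a' | b' <;> simp [fillLeft, ht]

lemma fillLeft_leftPart (i : Fin k → α ⊕ β) : fillLeft i (leftPart i) = i := by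
  funext t
  unfold fillLeft
  split
  · exact Sum.inl_getLeft _ _
  · rfl

lemma fillLeft_injective (i : Fin k → α ⊕ β) : Function.Injective (fillLeft i) := by
  intro g₁ g₂ h
  funext t
  simpa [fillLeft_of_isLeft _ _ t.2] using congrFun h t.1

lemma injective_fillLeft_iff {i : Fin k → α ⊕ β} (hi : Set.InjOn i {t | (i t).isRight})
    (g : leftPos i → α) : Function.Injective (fillLeft i g) ↔ Function.Injective g := by
  refine ⟨fun h t₁ t₂ hg => Subtype.ext (h ?_), fun hg t₁ t₂ h => ?_⟩
  · rw [fillLeft_of_isLeft i g t₁.2, fillLeft_of_isLeft i g t₂.2, hg]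
  by_cases h₁ : (i t₁).isLeft <;> by_cases h₂ : (i t₂).isLeft
  · rw [fillLeft_of_isLeft i g h₁, fillLeft_of_isLeft i g h₂] at h
    exact congrArg Subtype.val (hg (Sum.inl_injective h))
  · rw [fillLeft_of_isLeft i g h₁, fillLeft_of_not_isLeft i g h₂] at h
    simp [← h] at h₂
  · rw [fillLeft_of_not_isLeft i g h₁, fillLeft_of_isLeft i g h₂] at h
    simp [h] at h₁
  · rw [fillLeft_of_not_isLeft i g h₁, fillLeft_of_not_isLeft i g h₂] at h
    exact hi (Sum.not_isLeft.mp h₁) (Sum.not_isLeft.mp h₂) h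

lemma not_injective_fillLeft {i : Fin k → α ⊕ β} (hi : ¬Set.InjOn i {t | (i t).isRight})
    (g : leftPos i → α) : ¬Function.Injective (fillLeft i g) := fun h =>
  hi fun t₁ h₁ t₂ h₂ heq => h (by
    rw [fillLeft_of_not_isLeft _ _ (Sum.not_isLeft.mpr h₁),
      fillLeft_of_not_isLeft _ _ (Sum.not_isLeft.mpr h₂), heq])

end FillLeft

section FillLeftImage

variable {α β : Type*} [DecidableEq α] [DecidableEq β] {k : ℕ}

lemma image_fillLeft (i : Fin k → α ⊕ β) (g : leftPos i → α) :
    univ.image (fillLeft i g) = (univ.image g).disjSum (univ.image i).toRight := by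
  ext (a | b) <;> simp [fillLeft_eq_inl_iff, fillLeft_eq_inr_iff]

lemma card_leftPos {i : Fin k → α ⊕ β} (hi : Set.InjOn i {t | (i t).isRight}) :
    Fintype.card (leftPos i) = k - #(univ.image i).toRight := by
  have hright :
      (univ.image i).toRight.map .inr = (univ.filter fun t => (i t).isRight).image i := by
    ext (a | b)
    · simpa using fun t ht hta => by simp [hta] at ht
    · simpa using exists_congr fun t => ⟨fun h => ⟨by simp [h], h⟩, And.right⟩
  have hsplit :=
    card_filter_add_card_filter_not (s := (univ : Finset (Fin k))) (fun t => (i t).isLeft)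
  simp only [Sum.not_isLeft, card_univ, Fintype.card_fin] at hsplit
  rw [← card_map, hright, card_image_of_injOn (by simpa using hi), Fintype.card_subtype]
  omega

end FillLeftImage

section BlockConj

variable {α β S : Type*} [DecidableEq β] {k : ℕ}

lemma fromBlocks_zero_one_apply_ne_zero [Zero S] [One S] (R : Matrix α α S) {x y : α ⊕ β}
    (h : Matrix.fromBlocks R 0 0 1 x y ≠ 0) :
    (y.isLeft → x.isLeft) ∧ (¬y.isLeft → x = y) := by
  rcases x with a | b <;> rcases y with a' | b' <;> simp_all [Matrix.one_apply]

lemma mem_range_fillLeft_of_prod_ne_zero [CommMonoidWithZero S] (R : Matrix α α S)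
    {i j : Fin k → α ⊕ β} (h : ∏ t, Matrix.fromBlocks R 0 0 1 (j t) (i t) ≠ 0) :
    j ∈ Set.range (fillLeft i) := by
  have hj t := fromBlocks_zero_one_apply_ne_zero R (fun h0 => h (prod_eq_zero (mem_univ t) h0))
  refine ⟨fun t => (j t.1).getLeft ((hj t.1).1 t.2), funext fun t => ?_⟩
  by_cases ht : (i t).isLeft
  · simp [fillLeft, ht]
  · rw [fillLeft_of_not_isLeft _ _ ht, (hj t).2 ht]

lemma prod_fromBlocks_zero_one_fillLeft [CommMonoidWithZero S] (R : Matrix α α S)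
    (i : Fin k → α ⊕ β) (g : leftPos i → α) :
    ∏ t, Matrix.fromBlocks R 0 0 1 (fillLeft i g t) (i t) = ∏ t, R (g t) (leftPart i t) := by
  rw [← Fintype.prod_subtype_mul_prod_subtype (fun t => (i t).isLeft)]
  have hright :
      ∏ t : {t // ¬(i t).isLeft}, Matrix.fromBlocks R 0 0 1 (fillLeft i g t) (i t) = 1 := by
    refine Fintype.prod_eq_one _ fun t => ?_
    rw [fillLeft_of_not_isLeft _ _ t.2]
    obtain ⟨b, hb⟩ := Sum.isRight_iff.mp (Sum.not_isLeft.mp t.2)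
    simp [hb]
  rw [hright, mul_one]
  refine Fintype.prod_congr _ _ fun t => ?_
  have hi : i t = .inl (leftPart i t) := (Sum.inl_getLeft _ _).symm
  rw [fillLeft_of_isLeft _ _ t.2, hi, Matrix.fromBlocks_apply₁₁]

lemma tconj_fromBlocks_zero_one_apply [Fintype α] [Fintype β] (R : Matrix α α ℂ)
    (A : (Fin k → α ⊕ β) → ℂ) (i : Fin k → α ⊕ β) :
    tconj (Matrix.fromBlocks R 0 0 1) A i =
      ∑ g : leftPos i → α, A (fillLeft i g) * ∏ t, R (g t) (leftPart i t) := by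
  symm
  refine sum_of_injOn (fillLeft i) (fillLeft_injective i).injOn
    (fun _ _ => mem_coe.mpr (mem_univ _)) (fun j _ hj => ?_)
    (fun g _ => by rw [prod_fromBlocks_zero_one_fillLeft])
  by_contra hne
  obtain ⟨g, rfl⟩ := mem_range_fillLeft_of_prod_ne_zero R (right_ne_zero_of_mul hne)
  exact hj ⟨g, by simp, rfl⟩

end BlockConj

section Reindex

variable {V P : Type*} [Fintype V] {r : ℕ}

lemma tconj_comp_equiv [Fintype P] [DecidableEq P] (R : Matrix V V ℂ) (B : (Fin r → V) → ℂ)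
    (e : Fin r ≃ P) (a : P → V) :
    tconj R B (a ∘ e) = ∑ g : P → V, B (g ∘ e) * ∏ t, R (g t) (a t) := by
  refine Fintype.sum_equiv (e.arrowCongr (Equiv.refl V)) _ _ fun j => ?_
  have hj : (e.arrowCongr (Equiv.refl V) j) ∘ e = j := by ext; simp
  rw [hj, Fintype.prod_equiv e _ (fun t => R (e.arrowCongr (Equiv.refl V) j t) (a t))]
  simp

variable [DecidableEq V]

lemma adjTensor_eq_zero_of_not_injective (F : Finset (Finset V)) {j : Fin r → V}
    (hj : ¬Function.Injective j) : adjTensor F j = 0 := by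
  simp [adjTensor, hj]

lemma adjTensor_comp_equiv [Fintype P] (F : Finset (Finset V)) (e : Fin r ≃ P) (g : P → V) :
    adjTensor F (g ∘ e) = if Function.Injective g ∧ univ.image g ∈ F then 1 else 0 := by
  refine if_congr ?_ rfl rfl
  rw [e.injective_comp, ← image_image, image_univ_equiv]

end Reindex

section Link

variable {s d k : ℕ}

lemma map_inlEmb_union_map_inrEmb (f : Finset (Fin s)) (A : Finset (Fin d)) :
    f.map (inlEmb s d) ∪ A.map (inrEmb s d) = f.disjSum A := by
  rw [← map_inl_disjUnion_map_inr, disjUnion_eq_union]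
  rfl

lemma mem_linkE {E : Finset (Finset (Fin s ⊕ Fin d))} {A : Finset (Fin d)}
    {f : Finset (Fin s)} :
    f ∈ linkE E k A ↔ #f = k - #A ∧ f.disjSum A ∈ E := by
  simp [linkE, map_inlEmb_union_map_inrEmb]

def switchedE (T : Finset (Fin d) → Finset (Finset (Fin s))) :
    Finset (Finset (Fin s ⊕ Fin d)) :=
  univ.filter fun e => ∃ A : Finset (Fin d), ∃ f ∈ T A,
    e = f.map (inlEmb s d) ∪ A.map (inrEmb s d)

lemma disjSum_mem_switchedE {T : Finset (Fin d) → Finset (Finset (Fin s))} {A : Finset (Fin d)}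
    {f : Finset (Fin s)} : f.disjSum A ∈ switchedE T ↔ f ∈ T A := by
  simp [switchedE, map_inlEmb_union_map_inrEmb]

variable {i : Fin k → Fin s ⊕ Fin d}

lemma adjTensor_fillLeft (X : Finset (Finset (Fin s ⊕ Fin d)))
    (hi : Set.InjOn i {t | (i t).isRight}) (g : leftPos i → Fin s) :
    adjTensor X (fillLeft i g) =
      if Function.Injective g ∧ (univ.image g).disjSum (univ.image i).toRight ∈ X then 1
      else 0 := by
  refine if_congr ?_ rfl rfl
  rw [injective_fillLeft_iff hi, image_fillLeft]

lemma adjTensor_fillLeft_eq_linkE (E : Finset (Finset (Fin s ⊕ Fin d)))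
    (hi : Set.InjOn i {t | (i t).isRight}) (e : Fin (k - #(univ.image i).toRight) ≃ leftPos i)
    (g : leftPos i → Fin s) :
    adjTensor E (fillLeft i g) = adjTensor (linkE E k (univ.image i).toRight) (g ∘ e) := by
  rw [adjTensor_fillLeft E hi, adjTensor_comp_equiv]
  refine if_congr (and_congr_right fun hg => ?_) rfl rfl
  rw [mem_linkE, card_image_of_injective _ hg, card_univ, ← Fintype.card_congr e,
    Fintype.card_fin]
  simp

lemma adjTensor_fillLeft_eq_switchedE {r : ℕ} (T : Finset (Fin d) → Finset (Finset (Fin s)))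
    (hi : Set.InjOn i {t | (i t).isRight}) (e : Fin r ≃ leftPos i) (g : leftPos i → Fin s) :
    adjTensor (switchedE T) (fillLeft i g) = adjTensor (T (univ.image i).toRight) (g ∘ e) := by
  rw [adjTensor_fillLeft _ hi, adjTensor_comp_equiv]
  simp only [disjSum_mem_switchedE]

end Link

theorem main_switching_general {s d k : ℕ}
    (E : Finset (Finset (Fin s ⊕ Fin d)))
    (R : Matrix (Fin s) (Fin s) ℂ)
    (T : Finset (Fin d) → Finset (Finset (Fin s)))
    (hconj : ∀ A : Finset (Fin d), A.card ≤ k →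
      tconj R (adjTensor (linkE E k A) (r := k - A.card)) = adjTensor (T A))
    (EH : Finset (Finset (Fin s ⊕ Fin d)))
    (hEH : EH = Finset.univ.filter fun e => ∃ A : Finset (Fin d), ∃ f ∈ T A,
      e = f.map (inlEmb s d) ∪ A.map (inrEmb s d)) :
    tconj (Matrix.fromBlocks R 0 0 (1 : Matrix (Fin d) (Fin d) ℂ))
        (adjTensor E (r := k)) =
      adjTensor EH (r := k) := by
  change EH = switchedE T at hEH
  subst hEH
  funext i
  rw [tconj_fromBlocks_zero_one_apply]
  by_cases hi : Set.InjOn i {t | (i t).isRight}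
  · set A := (univ.image i).toRight
    have hA : #A ≤ k := card_toRight_le.trans (card_image_le.trans (by simp))
    have e : Fin (k - #A) ≃ leftPos i := (Fintype.equivFinOfCardEq (card_leftPos hi)).symm
    calc ∑ g, adjTensor E (fillLeft i g) * ∏ t, R (g t) (leftPart i t)
        = ∑ g, adjTensor (linkE E k A) (g ∘ e) * ∏ t, R (g t) (leftPart i t) :=
          sum_congr rfl fun g _ => by rw [adjTensor_fillLeft_eq_linkE E hi e]
      _ = tconj R (adjTensor (linkE E k A)) (leftPart i ∘ e) :=
          (tconj_comp_equiv R _ e (leftPart i)).symm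
      _ = adjTensor (T A) (leftPart i ∘ e) := by rw [hconj A hA]
      _ = adjTensor (switchedE T) i := by
          rw [← adjTensor_fillLeft_eq_switchedE T hi e, fillLeft_leftPart]
  · rw [adjTensor_eq_zero_of_not_injective _ fun h => hi h.injOn]
    simp [adjTensor_eq_zero_of_not_injective _ (not_injective_fillLeft hi _)]

/-- Main switching theorem: let `G` be a `k`-uniform hypergraph on `C ⊔ D` with
`|C| = s`, `R` an `s×s` matrix and `Q = R ⊕ I`. Suppose for every `A ⊆ D` with
`|A| ≤ k` the adjacency tensor `L^A` of the link of `A` in `C` satisfies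
`Rᵀ L^A R = adjacency tensor of a (k−|A|)-uniform hypergraph t(L^A) = T A` on `C`.
Define `H` by `E(H) = ⋃_{A ⊆ D} { f ∪ A : f ∈ T A }`. Then `Qᵀ A_G Q = A_H`. -/
theorem main_switching {s d k : ℕ} (hk : 2 ≤ k)
    (E : Finset (Finset (Fin s ⊕ Fin d))) (hE : ∀ e ∈ E, e.card = k)
    (R : Matrix (Fin s) (Fin s) ℂ)
    (T : Finset (Fin d) → Finset (Finset (Fin s)))
    (hT : ∀ A : Finset (Fin d), ∀ f ∈ T A, f.card = k - A.card)
    (hconj : ∀ A : Finset (Fin d), A.card ≤ k →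
      tconj R (adjTensor (linkE E k A) (r := k - A.card)) = adjTensor (T A))
    (EH : Finset (Finset (Fin s ⊕ Fin d)))
    (hEH : EH = Finset.univ.filter fun e => ∃ A : Finset (Fin d), ∃ f ∈ T A,
      e = f.map (inlEmb s d) ∪ A.map (inrEmb s d)) :
    tconj (Matrix.fromBlocks R 0 0 (1 : Matrix (Fin d) (Fin d) ℂ))
        (adjTensor E (r := k)) =
      adjTensor EH (r := k) :=
  main_switching_general E R T hconj EH hEH
end
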